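/- Let m, n be positive integers, B an m×n real matrix with full column rank, Q ∈ ℝ^m, P* = (BᵀB)⁻¹BᵀQ, r* = BP* − Q, and MSEuw = (1/m)∑_{i=1}^m (r*_i)². Assume the entries of r* do not all have the same absolute value, and let E ↦ (P(E), μ(E), w(E)) be the continuously differentiable solution branch of F(P, μ, w; E) = 0 defined on (MSEuw − δ₀, MSEuw] with (P(MSEuw), μ(MSEuw), w(MSEuw)) = (P*, 0, (1/m, …, 1/m)). Then there exists δ > 0 such that for every E ∈ (MSEuw − δ, MSEuw), the Gauss–Seidel iteration matrix G = −L⁻¹U of the Jacobian J_F evaluated at (P(E), μ(E), w(E)) has spectral radius strictly less than 1. -/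

import Mathlib

/-!
At `E = MSEuw` we have `μ = 0` and uniform weights, so the normal equations `Bᵀ r* = 0` kill the
coupling blocks `dᵀ` and `D`: the matrix `L` is block diagonal with the invertible block
`Bᵀ B / m` and a block of determinant `s = ∑ r*ᵢ² (MSEuw − r*ᵢ²)`, which is negative by the strict
Cauchy–Schwarz inequality for the `r*ᵢ²`. As `U` only couples the `P`-rows to the `w`-columns,
`G = −L⁻¹U` is then strictly block upper triangular, so `G² = 0`. Along the branch `G` depends
continuously on `E`, so `‖G(E)²‖ < 1` near `MSEuw`, and `ρ(G) ≤ ‖G²‖^(1/2)` concludes.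
-/

open Matrix Finset

/-- The map `F(P, μ, w; E) = (F1, F2, F3)` of the maximum-entropy weighted
least-squares system, with residual `r = BP − Q`. -/
noncomputable def Fmap (m n : ℕ) (B : Matrix (Fin m) (Fin n) ℝ) (Q : Fin m → ℝ)
    (E : ℝ) (P : Fin n → ℝ) (μ : ℝ) (w : Fin m → ℝ) :
    (Fin n → ℝ) × ℝ × (Fin m → ℝ) :=
  let r := B.mulVec P - Q
  (Bᵀ.mulVec ((Matrix.diagonal w).mulVec r),
   ∑ i : Fin m, Real.exp (-μ * (r i) ^ 2) * (r i) ^ 2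
     - E * ∑ i : Fin m, Real.exp (-μ * (r i) ^ 2),
   fun k => w k - Real.exp (-μ * (r k) ^ 2) / ∑ i : Fin m, Real.exp (-μ * (r i) ^ 2))

/-- The block lower-triangular part `L = [[A, 0, 0], [dᵀ, s, 0], [D, v, I]]` of
the Jacobian `J_F` of `F` with respect to `(P, μ, w)`, where with `r = BP − Q`
and `σ = ∑ i, e^{−μ r_i²}`:
`A = Bᵀ diag(w) B`, `dᵀ = (2 r ⊙ ((1+μE)u − μ r²) ⊙ e^{−μ r²})ᵀ B`,
`s = ∑ i r_i² e^{−μ r_i²}(E − r_i²)`,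
`D = (2μ/σ) diag(e^{−μ r²})((1/σ) diag(r) − u (r ⊙ e^{−μ r²})ᵀ) B`,
`v = σ⁻² diag(e^{−μ r²})(σ r² − (∑ i r_i² e^{−μ r_i²}) u)`. -/
noncomputable def jacL (m n : ℕ) (B : Matrix (Fin m) (Fin n) ℝ) (Q : Fin m → ℝ)
    (E : ℝ) (P : Fin n → ℝ) (μ : ℝ) (w : Fin m → ℝ) :
    Matrix (Fin n ⊕ (Unit ⊕ Fin m)) (Fin n ⊕ (Unit ⊕ Fin m)) ℝ :=
  let r := B.mulVec P - Q
  let σ : ℝ := ∑ i : Fin m, Real.exp (-μ * (r i) ^ 2)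
  let A := Bᵀ * Matrix.diagonal w * B
  let d : Fin n → ℝ :=
    Matrix.vecMul (fun i => 2 * r i * ((1 + μ * E) - μ * (r i) ^ 2)
      * Real.exp (-μ * (r i) ^ 2)) B
  let s : ℝ := ∑ i : Fin m, (r i) ^ 2 * Real.exp (-μ * (r i) ^ 2) * (E - (r i) ^ 2)
  let D : Matrix (Fin m) (Fin n) ℝ :=
    (2 * μ / σ) • ((Matrix.diagonal fun i => Real.exp (-μ * (r i) ^ 2)) *
      ((1 / σ) • Matrix.diagonal r -
        Matrix.vecMulVec (fun _ => (1 : ℝ))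
          (fun j => r j * Real.exp (-μ * (r j) ^ 2))) * B)
  let v : Fin m → ℝ := fun k => (1 / σ ^ 2) * Real.exp (-μ * (r k) ^ 2) *
    (σ * (r k) ^ 2 - ∑ i : Fin m, (r i) ^ 2 * Real.exp (-μ * (r i) ^ 2))
  Matrix.fromBlocks A 0
    (Matrix.of fun i j => Sum.elim (fun _ : Unit => d j) (fun k => D k j) i)
    (Matrix.fromBlocks (Matrix.of fun _ _ => s) 0
      (Matrix.of fun k _ => v k) (1 : Matrix (Fin m) (Fin m) ℝ))

/-- The strictly block upper-triangular part `U = [[0, 0, C], [0, 0, 0], [0, 0, 0]]`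
of the Jacobian `J_F`, where `C = Bᵀ diag(r)` with `r = BP − Q`. -/
noncomputable def jacU (m n : ℕ) (B : Matrix (Fin m) (Fin n) ℝ) (Q : Fin m → ℝ)
    (P : Fin n → ℝ) :
    Matrix (Fin n ⊕ (Unit ⊕ Fin m)) (Fin n ⊕ (Unit ⊕ Fin m)) ℝ :=
  let r := B.mulVec P - Q
  let C := Bᵀ * Matrix.diagonal r
  Matrix.fromBlocks 0
    (Matrix.of fun i j => Sum.elim (fun _ : Unit => (0 : ℝ)) (fun k => C i k) j)
    0 0

open Filter Topology

@[fun_prop]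
theorem Continuous.pi_sumElim {X α β R : Type*} [TopologicalSpace X] [TopologicalSpace R]
    {f : X → α → R} {g : X → β → R} (hf : Continuous f) (hg : Continuous g) :
    Continuous fun x => Sum.elim (f x) (g x) :=
  continuous_pi fun i => i.rec (fun a => (continuous_apply a).comp hf)
    (fun b => (continuous_apply b).comp hg)

theorem sum_mul_mean_sub_neg {ι : Type*} [Fintype ι] {a : ι → ℝ} (h : ∃ i j, a i ≠ a j) :
    ∑ i, a i * ((1 / (Fintype.card ι : ℝ)) * ∑ j, a j - a i) < 0 := by
  obtain ⟨i₀, j₀, hij⟩ := h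
  have : Nonempty ι := ⟨i₀⟩
  have hcard : (Fintype.card ι : ℝ) ≠ 0 := Nat.cast_ne_zero.2 Fintype.card_ne_zero
  set μ := (1 / (Fintype.card ι : ℝ)) * ∑ j, a j
  have hcentered : ∑ i, (a i - μ) = 0 := by
    simp only [Finset.sum_sub_distrib, Finset.sum_const, Finset.card_univ, nsmul_eq_mul, μ]
    field_simp
    ring
  have hvar : 0 < ∑ i, (a i - μ) ^ 2 := by
    obtain ⟨k, hk⟩ : ∃ k, a k - μ ≠ 0 := by
      by_contra! hall
      exact hij (by linarith [hall i₀, hall j₀])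
    exact Finset.sum_pos' (fun i _ => sq_nonneg _) ⟨k, Finset.mem_univ _, by positivity⟩
  calc ∑ i, a i * (μ - a i) = -∑ i, (a i - μ) ^ 2 - μ * ∑ i, (a i - μ) := by
        rw [Finset.mul_sum, ← Finset.sum_neg_distrib, ← Finset.sum_sub_distrib]
        exact Finset.sum_congr rfl fun i _ => by ring
    _ < 0 := by rw [hcentered]; linarith

theorem eventually_spectralRadius_lt_one_of_isNilpotent {X 𝕜 A : Type*} [TopologicalSpace X]
    [NormedField 𝕜] [NormedRing A] [NormedAlgebra 𝕜 A] [CompleteSpace A] [NormOneClass A]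
    {f : X → A} {s : Set X} {x₀ : X} (hf : ContinuousWithinAt f s x₀)
    (hnil : IsNilpotent (f x₀)) : ∀ᶠ x in 𝓝[s] x₀, spectralRadius 𝕜 (f x) < 1 := by
  obtain ⟨k, hk⟩ := hnil
  have hpow : ContinuousWithinAt (fun x => f x ^ (k + 1)) s x₀ := hf.pow (k + 1)
  rw [ContinuousWithinAt, pow_succ, hk, zero_mul] at hpow
  filter_upwards [hpow.norm.eventually (gt_mem_nhds (by simp : ‖(0 : A)‖ < 1))] with x hx
  calc spectralRadius 𝕜 (f x)
      ≤ (‖f x ^ (k + 1)‖₊ : ENNReal) ^ (1 / (k + 1) : ℝ) *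
          (‖(1 : A)‖₊ : ENNReal) ^ (1 / (k + 1) : ℝ) :=
        spectrum.spectralRadius_le_pow_nnnorm_pow_one_div 𝕜 (f x) k
    _ < 1 := by
      rw [nnnorm_one, ENNReal.coe_one, ENNReal.one_rpow, mul_one]
      exact ENNReal.rpow_lt_one (by exact_mod_cast hx) (by positivity)

namespace Matrix

variable {m n α : Type*}

theorem transpose_mulVec_residual_eq_zero [Fintype m] [Fintype n] [DecidableEq n] [CommRing α]
    {B : Matrix m n α} (hB : IsUnit (Bᵀ * B).det) (Q : m → α) :
    Bᵀ *ᵥ (B *ᵥ (((Bᵀ * B)⁻¹ * Bᵀ) *ᵥ Q) - Q) = 0 := by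
  rw [mulVec_sub, mulVec_mulVec, mulVec_mulVec, mul_nonsing_inv_cancel_left _ _ hB, sub_self]

theorem isUnit_transpose_mul_const_diagonal_mul [Fintype m] [Fintype n] [DecidableEq m]
    [DecidableEq n] [Field α] {B : Matrix m n α} (hB : IsUnit (Bᵀ * B).det) {c : α}
    (hc : c ≠ 0) : IsUnit (Bᵀ * diagonal (fun _ : m => c) * B) := by
  have hdiag : diagonal (fun _ : m => c) = c • (1 : Matrix m m α) := (smul_one_eq_diagonal c).symm
  rw [hdiag, Matrix.mul_smul, Matrix.mul_one, Matrix.smul_mul, isUnit_iff_isUnit_det, det_smul]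
  exact (hc.isUnit.pow _).mul hB

theorem isNilpotent_inv_fromBlocks_mul_fromBlocks [Fintype m] [Fintype n] [DecidableEq m]
    [DecidableEq n] [CommRing α] (A : Matrix m m α) (W : Matrix n n α) (Y : Matrix m n α)
    (hAW : IsUnit A ↔ IsUnit W) :
    IsNilpotent ((fromBlocks A 0 0 W)⁻¹ * fromBlocks 0 Y 0 0) := by
  refine ⟨2, ?_⟩
  rw [inv_fromBlocks_zero₁₂_of_isUnit_iff _ _ _ hAW]
  simp [pow_two, fromBlocks_multiply]

attribute [local instance] Matrix.linftyOpNormedRing Matrix.linftyOpNormedAlgebra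

theorem eventually_spectralRadius_neg_inv_mul_lt_one {X ι : Type*} [TopologicalSpace X]
    [Fintype ι] [DecidableEq ι] [Nonempty ι] {L U : X → Matrix ι ι ℝ} {s : Set X} {x₀ : X}
    (hL : ContinuousWithinAt L s x₀) (hU : ContinuousWithinAt U s x₀)
    (hdet : IsUnit (L x₀).det) (hnil : IsNilpotent ((L x₀)⁻¹ * U x₀)) :
    ∀ᶠ x in 𝓝[s] x₀, spectralRadius ℂ ((-((L x)⁻¹ * U x)).map (algebraMap ℝ ℂ)) < 1 := by
  have : CompleteSpace (Matrix ι ι ℂ) := FiniteDimensional.complete ℂ _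
  have hinv : ContinuousWithinAt (fun x => (L x)⁻¹) s x₀ :=
    (continuousAt_matrix_inv _ (by simpa using hdet.ne_zero.isUnit.inv)).comp_continuousWithinAt hL
  refine eventually_spectralRadius_lt_one_of_isNilpotent ?_ ?_
  · exact (continuous_id.matrix_map (continuous_algebraMap ℝ ℂ)).continuousAt
      |>.comp_continuousWithinAt (hinv.mul hU).neg
  · exact (hnil.neg).map (algebraMap ℝ ℂ).mapMatrix

end Matrix

section GaussSeidel

variable {m n : ℕ} (B : Matrix (Fin m) (Fin n) ℝ) (Q : Fin m → ℝ)

theorem continuous_jacL (hm : 0 < m) :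
    Continuous fun p : ℝ × (Fin n → ℝ) × ℝ × (Fin m → ℝ) =>
      jacL m n B Q p.1 p.2.1 p.2.2.1 p.2.2.2 := by
  have hσ : ∀ p : ℝ × (Fin n → ℝ) × ℝ × (Fin m → ℝ),
      ∑ i : Fin m, Real.exp (-p.2.2.1 * ((B *ᵥ p.2.1 - Q) i) ^ 2) ≠ 0 := fun p =>
    (Finset.sum_pos (fun i _ => Real.exp_pos _) ⟨⟨0, hm⟩, Finset.mem_univ _⟩).ne'
  unfold jacL
  dsimp only
  fun_prop (disch := first | exact fun p => hσ p | exact fun p => pow_ne_zero 2 (hσ p))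

theorem continuous_jacU : Continuous fun P => jacU m n B Q P := by
  unfold jacU
  fun_prop

theorem jacL_zero_eq_fromBlocks (E : ℝ) {P : Fin n → ℝ} (w : Fin m → ℝ)
    (hP : Bᵀ *ᵥ (B *ᵥ P - Q) = 0) :
    jacL m n B Q E P 0 w =
      fromBlocks (Bᵀ * diagonal w * B) 0 0 (jacL m n B Q E P 0 w).toBlocks₂₂ := by
  have hd : ∀ j, ∑ i, (B *ᵥ P - Q) i * B i j = 0 := fun j => by
    simpa [mulVec, dotProduct, mul_comm] using congrFun hP j
  rw [← fromBlocks_toBlocks (jacL m n B Q E P 0 w)]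
  congr 1
  ext (u | k) j
  · simp only [jacL, toBlocks_fromBlocks₂₁, of_apply, Sum.elim_inl, Matrix.zero_apply, vecMul,
      dotProduct, zero_mul, sub_zero, add_zero, neg_zero, Real.exp_zero, mul_one, mul_assoc,
      ← Finset.mul_sum, hd, mul_zero]
  · simp [jacL]

theorem det_jacL_toBlocks₂₂ (E : ℝ) (P : Fin n → ℝ) (μ : ℝ) (w : Fin m → ℝ) :
    (jacL m n B Q E P μ w).toBlocks₂₂.det =
      ∑ i, (B *ᵥ P - Q) i ^ 2 * Real.exp (-μ * (B *ᵥ P - Q) i ^ 2) * (E - (B *ᵥ P - Q) i ^ 2) := by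
  simp only [jacL, toBlocks_fromBlocks₂₂, det_fromBlocks_zero₁₂, det_unique, det_one, of_apply,
    mul_one]

theorem isUnit_det_jacL_zero_and_isNilpotent (hm : 0 < m) (hB : IsUnit (Bᵀ * B).det) {E : ℝ}
    {P : Fin n → ℝ} (hP : Bᵀ *ᵥ (B *ᵥ P - Q) = 0)
    (hs : ∑ i, (B *ᵥ P - Q) i ^ 2 * (E - (B *ᵥ P - Q) i ^ 2) ≠ 0) :
    IsUnit (jacL m n B Q E P 0 fun _ => 1 / (m : ℝ)).det ∧
      IsNilpotent ((jacL m n B Q E P 0 fun _ => 1 / (m : ℝ))⁻¹ * jacU m n B Q P) := by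
  have hL := jacL_zero_eq_fromBlocks B Q E (fun _ => 1 / (m : ℝ)) hP
  set W := (jacL m n B Q E P 0 fun _ => 1 / (m : ℝ)).toBlocks₂₂
  have hA : IsUnit (Bᵀ * diagonal (fun _ : Fin m => 1 / (m : ℝ)) * B) :=
    isUnit_transpose_mul_const_diagonal_mul hB (by positivity)
  have hW : IsUnit W := by
    rw [isUnit_iff_isUnit_det, det_jacL_toBlocks₂₂]
    simpa using hs
  rw [hL, det_fromBlocks_zero₁₂]
  exact ⟨((isUnit_iff_isUnit_det _).1 hA).mul ((isUnit_iff_isUnit_det _).1 hW),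
    isNilpotent_inv_fromBlocks_mul_fromBlocks _ _ _ (iff_of_true hA hW)⟩

end GaussSeidel

theorem stmt_1_general (m n : ℕ) (hm : 0 < m)
    (B : Matrix (Fin m) (Fin n) ℝ) (Q : Fin m → ℝ)
    (hB : IsUnit (Bᵀ * B).det)
    (Pstar : Fin n → ℝ) (hP : Pstar = ((Bᵀ * B)⁻¹ * Bᵀ).mulVec Q)
    (rstar : Fin m → ℝ) (hr : rstar = B.mulVec Pstar - Q)
    (MSEuw : ℝ) (hM : MSEuw = (1 / (m : ℝ)) * ∑ i : Fin m, (rstar i) ^ 2)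
    (hres : ¬ ∀ i j : Fin m, |rstar i| = |rstar j|)
    (δ₀ : ℝ) (hδ₀ : 0 < δ₀)
    (Pf : ℝ → Fin n → ℝ) (μf : ℝ → ℝ) (wf : ℝ → Fin m → ℝ)
    (hC1 : ContDiffOn ℝ 1 (fun E => (Pf E, μf E, wf E)) (Set.Ioc (MSEuw - δ₀) MSEuw))
    (hend : Pf MSEuw = Pstar ∧ μf MSEuw = 0 ∧ wf MSEuw = fun _ => 1 / (m : ℝ)) :
    ∃ δ > (0 : ℝ), ∀ E ∈ Set.Ioo (MSEuw - δ) MSEuw,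
      spectralRadius ℂ
        ((-((jacL m n B Q E (Pf E) (μf E) (wf E))⁻¹
            * jacU m n B Q (Pf E))).map (algebraMap ℝ ℂ)) < 1 := by
  obtain ⟨hPend, hμend, hwend⟩ := hend
  have hnormal : Bᵀ *ᵥ (B *ᵥ Pf MSEuw - Q) = 0 := by
    rw [hPend, hP]
    exact transpose_mulVec_residual_eq_zero hB Q
  have hs : ∑ i, rstar i ^ 2 * (MSEuw - rstar i ^ 2) ≠ 0 := by
    push Not at hres
    obtain ⟨i, j, hij⟩ := hres
    have hspread : rstar i ^ 2 ≠ rstar j ^ 2 := by rwa [Ne, sq_eq_sq_iff_abs_eq_abs]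
    have hneg := sum_mul_mean_sub_neg (a := fun i => rstar i ^ 2) ⟨i, j, hspread⟩
    rw [Fintype.card_fin, ← hM] at hneg
    exact hneg.ne
  obtain ⟨hdet, hnil⟩ := isUnit_det_jacL_zero_and_isNilpotent B Q hm hB hnormal
    (by rwa [hPend, ← hr])
  rw [← hμend, ← hwend] at hdet hnil
  have hbranch : ContinuousWithinAt (fun E => (Pf E, μf E, wf E))
      (Set.Ioc (MSEuw - δ₀) MSEuw) MSEuw :=
    hC1.continuousOn MSEuw ⟨by linarith, le_rfl⟩
  have hev := eventually_spectralRadius_neg_inv_mul_lt_one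
    (L := fun E => jacL m n B Q E (Pf E) (μf E) (wf E)) (U := fun E => jacU m n B Q (Pf E))
    -- the `(· :)` ascription keeps unification from unfolding `jacL`
    ((continuous_jacL B Q hm).continuousAt.comp_continuousWithinAt
      (continuousWithinAt_id.prodMk hbranch) :)
    ((continuous_jacU B Q).continuousAt.comp_continuousWithinAt hbranch.fst) hdet hnil
  rw [nhdsWithin_Ioc_eq_nhdsLE (by linarith)] at hev
  obtain ⟨l, hl, hsub⟩ := mem_nhdsLE_iff_exists_Ioc_subset.1 hev
  exact ⟨MSEuw - l, sub_pos.2 hl, fun E hE => hsub ⟨by linarith [hE.1], hE.2.le⟩⟩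

/-- Along the smooth solution branch of the maximum-entropy
system emanating from the ordinary least-squares point at `E = MSEuw`, there is
`δ > 0` such that for every `E ∈ (MSEuw − δ, MSEuw)` the Gauss–Seidel iteration
matrix `G = −L⁻¹U` of the Jacobian `J_F` evaluated at `(P(E), μ(E), w(E))` has
spectral radius strictly less than `1`. -/
theorem stmt_1 (m n : ℕ) (hm : 0 < m) (hn : 0 < n)
    (B : Matrix (Fin m) (Fin n) ℝ) (Q : Fin m → ℝ)
    (hB : IsUnit (Bᵀ * B).det)
    (Pstar : Fin n → ℝ) (hP : Pstar = ((Bᵀ * B)⁻¹ * Bᵀ).mulVec Q)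
    (rstar : Fin m → ℝ) (hr : rstar = B.mulVec Pstar - Q)
    (MSEuw : ℝ) (hM : MSEuw = (1 / (m : ℝ)) * ∑ i : Fin m, (rstar i) ^ 2)
    (hres : ¬ ∀ i j : Fin m, |rstar i| = |rstar j|)
    (δ₀ : ℝ) (hδ₀ : 0 < δ₀)
    (Pf : ℝ → Fin n → ℝ) (μf : ℝ → ℝ) (wf : ℝ → Fin m → ℝ)
    (hC1 : ContDiffOn ℝ 1 (fun E => (Pf E, μf E, wf E)) (Set.Ioc (MSEuw - δ₀) MSEuw))
    (hzero : ∀ E ∈ Set.Ioc (MSEuw - δ₀) MSEuw,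
      Fmap m n B Q E (Pf E) (μf E) (wf E) = 0)
    (hend : Pf MSEuw = Pstar ∧ μf MSEuw = 0 ∧ wf MSEuw = fun _ => 1 / (m : ℝ)) :
    ∃ δ > (0 : ℝ), ∀ E ∈ Set.Ioo (MSEuw - δ) MSEuw,
      spectralRadius ℂ
        ((-((jacL m n B Q E (Pf E) (μf E) (wf E))⁻¹
            * jacU m n B Q (Pf E))).map (algebraMap ℝ ℂ)) < 1 :=
  stmt_1_general m n hm B Q hB Pstar hP rstar hr MSEuw hM hres δ₀ hδ₀ Pf μf wf hC1 hend
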